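/- arXiv:math-ph/0508049 — 6 statements merged into one kernel-verified Lean document; each statement's English description precedes it below -/
import Mathlib

section
/- Let X be a countable set and k : X × X → ℝ a kernel with 0 ≤ k(x,y) ≤ k₀ for some uniform bound k₀, and suppose there exists N such that each row and each column of k has at most N nonzero entries. Let Y ⊆ X be finite and let j be a nonnegative kernel on Y × Y with j(x,y) ≤ k(x,y) for all (x,y) ∈ Y × Y. Then the spectral radius of the matrix J defined by j on ℓ(Y) is at most the spectral radius of the operator K on ℓ²(X) defined by k. -/
/-!
The kernel operator `K` preserves the cone of nonnegative sequences. For real `t` above its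
spectral radius the resolvent `(t - K)⁻¹` is then positive too: for `t > ‖K‖` it is a Neumann
series, and positivity propagates down the ray `[t, ∞)` (which lies in the resolvent set) because
`(s - h - K)⁻¹ = ∑ₙ (h (s - K)⁻¹)ⁿ (s - K)⁻¹` for small `h ≥ 0`. Expanding the resolvent gives
`Kⁿ ≤ tⁿ⁺¹ (t - K)⁻¹` in the cone order, so the entries of `Kⁿ` are `O(tⁿ)`. Since
`0 ≤ Jⁿ ≤ Kⁿ` entrywise on `Y × Y`, also `‖Jⁿ‖ = O(tⁿ)`, and the spectral radius of `J` is at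
most `t`.
-/

open scoped ENNReal NNReal Classical
open Set Filter Topology

namespace ProperCone

variable {E : Type*} [NormedAddCommGroup E] [NormedSpace ℝ E] (C : ProperCone ℝ E)
  {S T : E →L[ℝ] E}

theorem mapsTo_add (hS : MapsTo S C C) (hT : MapsTo T C C) : MapsTo ⇑(S + T) C C :=
  fun _ hx => C.add_mem (hS hx) (hT hx)

theorem mapsTo_smul {c : ℝ} (hc : 0 ≤ c) (hT : MapsTo T C C) : MapsTo ⇑(c • T) C C :=
  fun _ hx => C.smul_mem (hT hx) hc

theorem mapsTo_mul (hS : MapsTo S C C) (hT : MapsTo T C C) : MapsTo ⇑(S * T) C C :=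
  hS.comp hT

theorem mapsTo_pow (hT : MapsTo T C C) (n : ℕ) : MapsTo ⇑(T ^ n) C C := by
  induction n with
  | zero => exact mapsTo_id _
  | succ n ih => rw [pow_succ]; exact mapsTo_mul C ih hT

theorem mapsTo_algebraMap {c : ℝ} (hc : 0 ≤ c) : MapsTo ⇑(algebraMap ℝ (E →L[ℝ] E) c) C C := by
  rw [Algebra.algebraMap_eq_smul_one]
  exact mapsTo_smul C hc (mapsTo_id _)

theorem mapsTo_tsum {F : ℕ → E →L[ℝ] E} (hF : ∀ n, MapsTo (F n) C C) :
    MapsTo ⇑(∑' n, F n) C C := by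
  by_cases hs : Summable F
  · intro x hx
    exact C.isClosed.mem_of_tendsto (hs.hasSum.mapL (.apply ℝ E x))
      (Eventually.of_forall fun s => sum_mem fun n _ => hF n hx)
  · rw [tsum_eq_zero_of_not_summable hs]
    exact fun _ _ => C.zero_mem

theorem isClosed_setOf_mapsTo : IsClosed {T : E →L[ℝ] E | MapsTo T C C} := by
  simp only [MapsTo, ofPred_forall]
  exact isClosed_iInter fun x => isClosed_iInter fun _ =>
    C.isClosed.preimage (ContinuousLinearMap.apply ℝ E x).continuous

variable {K : E →L[ℝ] E}

theorem mapsTo_pow_smul_resolvent_sub_pow (hK : MapsTo K C C) {t : ℝ} (ht0 : 0 ≤ t)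
    (ht : t ∈ resolventSet ℝ K) (hR : MapsTo ⇑(resolvent K t) C C) (n : ℕ) :
    MapsTo ⇑(t ^ (n + 1) • resolvent K t - K ^ n) C C := by
  have hKR : K * resolvent K t = t • resolvent K t - 1 := by
    have := Ring.mul_inverse_cancel _ ht
    rw [← resolvent, sub_mul, Algebra.algebraMap_eq_smul_one, smul_one_mul] at this
    rw [← this]; abel
  induction n with
  | zero => simpa [hKR] using mapsTo_mul C hK hR
  | succ n ih =>
    have hstep : t ^ (n + 2) • resolvent K t - K ^ (n + 1) =
        K * (t ^ (n + 1) • resolvent K t - K ^ n) + algebraMap ℝ _ (t ^ (n + 1)) := by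
      rw [mul_sub, mul_smul_comm, hKR, ← pow_succ', Algebra.algebraMap_eq_smul_one]
      module
    rw [hstep]
    exact mapsTo_add C (mapsTo_mul C hK ih) (mapsTo_algebraMap C (by positivity))

variable [CompleteSpace E]

theorem mapsTo_inverse_sub {A B : E →L[ℝ] E} (hA : IsUnit A)
    (hAinv : MapsTo ⇑(Ring.inverse A) C C) (hB : MapsTo B C C) (hlt : ‖Ring.inverse A * B‖ < 1) :
    MapsTo ⇑(Ring.inverse (A - B)) C C := by
  have hAB : A - B = A * (1 - Ring.inverse A * B) := by
    rw [mul_sub, mul_one, ← mul_assoc, Ring.mul_inverse_cancel A hA, one_mul]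
  rw [hAB, Ring.inverse_mul (.inl hA), ← geom_series_eq_inverse _ hlt]
  exact mapsTo_mul C (mapsTo_tsum C fun n => mapsTo_pow C (mapsTo_mul C hAinv hB) n) hAinv

theorem mapsTo_resolvent_of_norm_lt (hK : MapsTo K C C) {s : ℝ} (hs : ‖K‖ < s) :
    MapsTo ⇑(resolvent K s) C C := by
  have hs0 : 0 < s := (norm_nonneg K).trans_lt hs
  have hA : IsUnit (algebraMap ℝ (E →L[ℝ] E) s) := (isUnit_iff_ne_zero.mpr hs0.ne').map _
  have hinv : Ring.inverse (algebraMap ℝ (E →L[ℝ] E) s) = algebraMap ℝ _ s⁻¹ := by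
    simpa using (Ring.inverse_mul_eq_iff_eq_mul _ 1 _ hA).mpr
      (by rw [← map_mul, mul_inv_cancel₀ hs0.ne', map_one])
  refine mapsTo_inverse_sub C hA (hinv ▸ mapsTo_algebraMap C (inv_nonneg.mpr hs0.le)) hK ?_
  rw [hinv, Algebra.algebraMap_eq_smul_one, smul_one_mul, norm_smul, Real.norm_of_nonneg
    (inv_nonneg.mpr hs0.le), inv_mul_lt_iff₀ hs0, mul_one]
  exact hs

theorem mapsTo_resolvent_sub {s : ℝ} (hs : s ∈ resolventSet ℝ K) (hR : MapsTo ⇑(resolvent K s) C C)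
    {h : ℝ} (hh : 0 ≤ h) (hlt : h * ‖resolvent K s‖ < 1) :
    MapsTo ⇑(resolvent K (s - h)) C C := by
  have hsub : algebraMap ℝ (E →L[ℝ] E) (s - h) - K = (algebraMap ℝ _ s - K) - algebraMap ℝ _ h := by
    rw [map_sub]; abel
  rw [resolvent, hsub]
  refine mapsTo_inverse_sub C hs hR (mapsTo_algebraMap C hh) ?_
  rwa [← resolvent, Algebra.algebraMap_eq_smul_one, mul_smul_one, norm_smul, Real.norm_of_nonneg hh]

theorem mapsTo_resolvent_of_Ici_subset (hK : MapsTo K C C) {t : ℝ}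
    (ht : Ici t ⊆ resolventSet ℝ K) {s : ℝ} (hs : t ≤ s) : MapsTo ⇑(resolvent K s) C C := by
  set c := max s (‖K‖ + 1)
  have hsc : s ≤ c := le_max_left _ _
  have hIcc : Icc s c ⊆ resolventSet ℝ K := fun u hu => ht (hs.trans hu.1)
  have hcont : ContinuousOn (resolvent K) (Icc s c) := fun u hu =>
    (spectrum.hasDerivAt_resolvent_const_left (hIcc hu)).continuousAt.continuousWithinAt
  have hclosed : IsClosed ({u | MapsTo ⇑(resolvent K u) C C} ∩ Icc s c) := by
    rw [inter_comm]
    exact hcont.preimage_isClosed_of_isClosed isClosed_Icc (isClosed_setOf_mapsTo C)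
  refine hclosed.mem_of_ge_of_forall_exists_lt
    (mapsTo_resolvent_of_norm_lt C hK ((lt_add_one _).trans_le (le_max_right _ _))) hsc ?_
  rintro u ⟨hu, hsu, huc⟩
  set h := min (u - s) (‖resolvent K u‖ + 1)⁻¹
  have hh : 0 < h := lt_min (sub_pos.mpr hsu) (by positivity)
  have hlt : h * ‖resolvent K u‖ < 1 := by
    calc h * ‖resolvent K u‖ ≤ (‖resolvent K u‖ + 1)⁻¹ * ‖resolvent K u‖ := by
          gcongr; exact min_le_right _ _
      _ < 1 := by rw [inv_mul_lt_iff₀ (by positivity)]; linarith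
  refine ⟨u - h, mapsTo_resolvent_sub C (hIcc ⟨hsu.le, huc⟩) hu hh.le hlt, ?_, by linarith⟩
  linarith [min_le_left (u - s) (‖resolvent K u‖ + 1)⁻¹]

end ProperCone

open ProperCone

namespace lp

variable (α : Type*) (p : ℝ≥0∞) [Fact (1 ≤ p)]

def nonnegCone : ProperCone ℝ (lp (fun _ : α => ℝ) p) where
  carrier := {f | ∀ i, 0 ≤ f i}
  add_mem' hf hg i := add_nonneg (hf i) (hg i)
  zero_mem' _ := le_rfl
  smul_mem' c _ hf i := mul_nonneg c.2 (hf i)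
  isClosed' := by
    simp only [Set.ofPred_forall]
    exact isClosed_iInter fun i =>
      isClosed_le continuous_const (lp.evalCLM ℝ (fun _ : α => ℝ) p i).continuous

variable {α p}

theorem single_one_mem_nonnegCone (b : α) : lp.single p b (1 : ℝ) ∈ nonnegCone α p := by
  intro i
  rw [lp.single_apply, Pi.single_apply]
  split_ifs <;> norm_num

theorem apply_single_one_le_opNorm (T : lp (fun _ : α => ℝ) p →L[ℝ] lp (fun _ : α => ℝ) p)
    (a b : α) : T (lp.single p b (1 : ℝ)) a ≤ ‖T‖ := by
  have hp : 0 < p := zero_lt_one.trans_le Fact.out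
  have hnorm : ‖(lp.single p b (1 : ℝ) : lp (fun _ : α => ℝ) p)‖ = 1 := by
    rw [lp.norm_single hp, norm_one]
  calc T (lp.single p b (1 : ℝ)) a ≤ ‖T (lp.single p b (1 : ℝ)) a‖ := Real.le_norm_self _
    _ ≤ ‖T (lp.single p b (1 : ℝ))‖ := lp.norm_apply_le_norm hp.ne' _ a
    _ ≤ ‖T‖ * ‖(lp.single p b (1 : ℝ) : lp (fun _ : α => ℝ) p)‖ := T.le_opNorm _
    _ = ‖T‖ := by rw [hnorm, mul_one]

theorem apply_pow_single_one_le {K : lp (fun _ : α => ℝ) p →L[ℝ] lp (fun _ : α => ℝ) p}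
    (hK : MapsTo K (nonnegCone α p) (nonnegCone α p)) {t : ℝ} (ht0 : 0 ≤ t)
    (ht : Ici t ⊆ resolventSet ℝ K) (n : ℕ) (a b : α) :
    (K ^ n) (lp.single p b (1 : ℝ)) a ≤ t ^ (n + 1) * ‖resolvent K t‖ := by
  have hdom := mapsTo_pow_smul_resolvent_sub_pow _ hK ht0 (ht self_mem_Ici)
    (mapsTo_resolvent_of_Ici_subset _ hK ht le_rfl) n (single_one_mem_nonnegCone b) a
  replace hdom : 0 ≤ t ^ (n + 1) * resolvent K t (lp.single p b (1 : ℝ)) a -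
      (K ^ n) (lp.single p b (1 : ℝ)) a := hdom
  calc (K ^ n) (lp.single p b (1 : ℝ)) a
        ≤ t ^ (n + 1) * resolvent K t (lp.single p b (1 : ℝ)) a := sub_nonneg.mp hdom
    _ ≤ t ^ (n + 1) * ‖resolvent K t‖ := by
        gcongr; exact apply_single_one_le_opNorm _ a b

section Kernel

variable {k : α → α → ℝ} {K : lp (fun _ : α => ℝ) p →L[ℝ] lp (fun _ : α => ℝ) p}

theorem mapsTo_nonnegCone_of_kernel (hk : ∀ x y, 0 ≤ k x y)
    (hK : ∀ f x, K f x = ∑' y, k x y * f y) : MapsTo K (nonnegCone α p) (nonnegCone α p) :=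
  fun f hf x => (hK f x).symm ▸ tsum_nonneg fun y => mul_nonneg (hk x y) (hf y)

theorem sum_mul_le_apply_of_kernel (hk : ∀ x y, 0 ≤ k x y)
    (hK : ∀ f x, K f x = ∑' y, k x y * f y) (hrow : ∀ x, {y | k x y ≠ 0}.Finite)
    {f : lp (fun _ : α => ℝ) p} (hf : f ∈ nonnegCone α p) (x : α) (Y : Finset α) :
    ∑ y ∈ Y, k x y * f y ≤ K f x := by
  rw [hK]
  exact (summable_of_hasFiniteSupport (Function.HasFiniteSupport.mul_left (hrow x) _)).sum_le_tsum
    Y fun y _ => mul_nonneg (hk x y) (hf y)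

theorem matrix_pow_apply_le_of_kernel (hk : ∀ x y, 0 ≤ k x y)
    (hK : ∀ f x, K f x = ∑' y, k x y * f y) (hrow : ∀ x, {y | k x y ≠ 0}.Finite)
    {Y : Finset α} {J : Matrix Y Y ℝ} (hJ0 : ∀ a b, 0 ≤ J a b) (hJk : ∀ a b, J a b ≤ k a b)
    (n : ℕ) (a b : Y) :
    0 ≤ (J ^ n) a b ∧ (J ^ n) a b ≤ (K ^ n) (lp.single p (b : α) (1 : ℝ)) a := by
  induction n generalizing a with
  | zero =>
    rcases eq_or_ne a b with rfl | hab
    · simp [lp.single_apply]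
    · simp [lp.single_apply, hab, Subtype.coe_ne_coe.mpr hab]
  | succ n ih =>
    set e := (K ^ n) (lp.single p (b : α) (1 : ℝ))
    have he : e ∈ nonnegCone α p := mapsTo_pow (nonnegCone α p)
      (mapsTo_nonnegCone_of_kernel hk hK) n (single_one_mem_nonnegCone (b : α))
    rw [pow_succ', pow_succ', Matrix.mul_apply]
    refine ⟨Finset.sum_nonneg fun z _ => mul_nonneg (hJ0 a z) (ih z).1, ?_⟩
    calc ∑ z, J a z * (J ^ n) z b
        ≤ ∑ z : Y, k a z * e z := Finset.sum_le_sum fun z _ =>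
          mul_le_mul (hJk a z) (ih z).2 (ih z).1 ((hJ0 a z).trans (hJk a z))
      _ = ∑ z ∈ Y, k a z * e z := Finset.sum_coe_sort Y fun z => k a z * e z
      _ ≤ K e a := sum_mul_le_apply_of_kernel hk hK hrow he a Y

end Kernel

end lp

theorem spectrum.spectralRadius_le_of_nnnorm_pow_le {𝕜 A : Type*} [NormedField 𝕜] [NormedRing A]
    [NormedAlgebra 𝕜 A] [CompleteSpace A] (a : A) {M t : ℝ≥0} (h : ∀ n, ‖a ^ n‖₊ ≤ M * t ^ n) :
    spectralRadius 𝕜 a ≤ t := by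
  have hlim : Tendsto (fun n : ℕ => (((M + 1) ^ (1 / (n : ℝ)) * t : ℝ≥0) : ℝ≥0∞)) atTop
      (𝓝 t) := by
    refine ENNReal.tendsto_coe.mpr ?_
    simpa using (tendsto_const_nhds.nnrpow tendsto_one_div_atTop_nhds_zero_nat
      (Or.inl (by positivity : M + 1 ≠ 0))).mul_const t
  refine (spectrum.spectralRadius_le_liminf_pow_nnnorm_pow_one_div 𝕜 a).trans ?_
  rw [← hlim.liminf_eq]
  refine liminf_le_liminf (eventually_atTop.mpr ⟨1, fun n hn => ?_⟩)
  rw [← ENNReal.coe_rpow_of_nonneg _ (by positivity), ENNReal.coe_le_coe]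
  calc ‖a ^ n‖₊ ^ (1 / (n : ℝ)) ≤ ((M + 1) * t ^ n) ^ (1 / (n : ℝ)) := by
        gcongr; exact (h n).trans (by gcongr; exact le_self_add)
    _ = (M + 1) ^ (1 / (n : ℝ)) * t := by
        rw [NNReal.mul_rpow, one_div, NNReal.pow_rpow_inv_natCast t (by omega)]

section

attribute [local instance] Matrix.linftyOpNormedAddCommGroup Matrix.linftyOpNormedRing
  Matrix.linftyOpNormedAlgebra

theorem Matrix.linfty_opNNNorm_le_card_mul {m n : Type*} [Fintype m] [Fintype n]
    (A : Matrix m n ℝ) {β : ℝ≥0} (h : ∀ i j, ‖A i j‖₊ ≤ β) : ‖A‖₊ ≤ Fintype.card n * β := by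
  rw [Matrix.linfty_opNNNorm_def]
  refine Finset.sup_le fun i _ => ?_
  calc ∑ j, ‖A i j‖₊ ≤ Finset.univ.card • β :=
        Finset.sum_le_card_nsmul _ _ _ fun j _ => h i j
    _ = Fintype.card n * β := by rw [Finset.card_univ, nsmul_eq_mul]

theorem Matrix.spectralRadius_toEuclideanCLM_le {n : Type*} [Fintype n] [DecidableEq n]
    (A : Matrix n n ℝ) {M t : ℝ≥0} (h : ∀ k i j, ‖(A ^ k) i j‖₊ ≤ M * t ^ k) :
    spectralRadius ℝ (Matrix.toEuclideanCLM (𝕜 := ℝ) A) ≤ t := by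
  rw [spectralRadius, AlgEquiv.spectrum_eq]
  refine spectrum.spectralRadius_le_of_nnnorm_pow_le (M := Fintype.card n * M) A fun k => ?_
  calc ‖A ^ k‖₊ ≤ Fintype.card n * (M * t ^ k) := Matrix.linfty_opNNNorm_le_card_mul _ (h k)
    _ = Fintype.card n * M * t ^ k := by ring

end

theorem generalized_wielandt_general
    (X : Type*)
    (k : X → X → ℝ) (k₀ : ℝ)
    (hk : ∀ x y, 0 ≤ k x y ∧ k x y ≤ k₀)
    (N : ℕ)
    (hrow : ∀ x : X, Set.Finite {y | k x y ≠ 0} ∧ {y | k x y ≠ 0}.ncard ≤ N)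
    (K : lp (fun _ : X => ℝ) 2 →L[ℝ] lp (fun _ : X => ℝ) 2)
    (hK : ∀ (f : lp (fun _ : X => ℝ) 2) (x : X), (K f) x = ∑' y, k x y * f y)
    (Y : Finset X) (j : X → X → ℝ)
    (hj0 : ∀ x ∈ Y, ∀ y ∈ Y, 0 ≤ j x y)
    (hjk : ∀ x ∈ Y, ∀ y ∈ Y, j x y ≤ k x y)
    (J : Matrix Y Y ℝ) (hJ : ∀ x y : Y, J x y = j x y) :
    spectralRadius ℝ (Matrix.toEuclideanCLM (𝕜 := ℝ) J) ≤ spectralRadius ℝ K := by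
  have hk0 x y : 0 ≤ k x y := (hk x y).1
  have hJ0 (a b : Y) : 0 ≤ J a b := hJ a b ▸ hj0 a a.2 b b.2
  have hJk (a b : Y) : J a b ≤ k a b := hJ a b ▸ hjk a a.2 b b.2
  refine le_of_forall_gt_imp_ge_of_dense fun c hc => ?_
  induction c with
  | top => exact le_top
  | coe t =>
    have hray : Ici (t : ℝ) ⊆ resolventSet ℝ K := fun s hs =>
      spectrum.mem_resolventSet_of_spectralRadius_lt <|
        hc.trans_le (ENNReal.coe_le_coe.mpr (by exact_mod_cast hs.trans (Real.le_norm_self s)))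
    refine Matrix.spectralRadius_toEuclideanCLM_le J (M := t * ‖resolvent K (t : ℝ)‖₊)
      fun n a b => ?_
    obtain ⟨hpos, hle⟩ :=
      lp.matrix_pow_apply_le_of_kernel hk0 hK (fun x => (hrow x).1) hJ0 hJk n a b
    have hKn := lp.apply_pow_single_one_le (lp.mapsTo_nonnegCone_of_kernel hk0 hK)
      t.coe_nonneg hray n a b
    rw [← NNReal.coe_le_coe, coe_nnnorm, Real.norm_of_nonneg hpos, NNReal.coe_mul, NNReal.coe_mul,
      NNReal.coe_pow, coe_nnnorm]
    calc (J ^ n) a b ≤ _ := hle.trans hKn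
      _ = _ := by ring

/-- Generalized Wielandt theorem: a nonnegative finite submatrix dominated by a
nonnegative kernel has spectral radius at most that of the kernel operator. -/
theorem generalized_wielandt
    (X : Type*) [Countable X]
    (k : X → X → ℝ) (k₀ : ℝ)
    (hk : ∀ x y, 0 ≤ k x y ∧ k x y ≤ k₀)
    (N : ℕ)
    (hrow : ∀ x : X, Set.Finite {y | k x y ≠ 0} ∧ {y | k x y ≠ 0}.ncard ≤ N)
    (hcol : ∀ y : X, Set.Finite {x | k x y ≠ 0} ∧ {x | k x y ≠ 0}.ncard ≤ N)
    (K : lp (fun _ : X => ℝ) 2 →L[ℝ] lp (fun _ : X => ℝ) 2)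
    (hK : ∀ (f : lp (fun _ : X => ℝ) 2) (x : X), (K f) x = ∑' y, k x y * f y)
    (Y : Finset X) (j : X → X → ℝ)
    (hj0 : ∀ x ∈ Y, ∀ y ∈ Y, 0 ≤ j x y)
    (hjk : ∀ x ∈ Y, ∀ y ∈ Y, j x y ≤ k x y)
    (J : Matrix Y Y ℝ) (hJ : ∀ x y : Y, J x y = j x y) :
    spectralRadius ℝ (Matrix.toEuclideanCLM (𝕜 := ℝ) J) ≤ spectralRadius ℝ K :=
  generalized_wielandt_general X k k₀ hk N hrow K hK Y j hj0 hjk J hJ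
end

section
/- Let 0 < q < 1, Δ = (q + q⁻¹)/2, and z ∈ ℂ with z ≠ 0 such that all relevant denominators are nonzero. With Ξ_m(z) as above, for every m, 1 − (1/(2Δ))[Ξ_m(z) + Ξ_m(z)^{-1}] = ((1−q²)/(1+q²)) · [1/(1 + q^{2m+1} z) − 1/(1 + q^{2m−1} z)]. -/
/-!
Multiplying numerator and denominator of `Ξ_m(z)` by `z^{1/2} q^{m+1/2}` turns it into the
Möbius transformation `Ξ_m(z) = (x + q) / (1 + q x)` of `x = q^{2m} z`. Since also
`q^{2m±1} z = q^{±1} x`, both sides become rational functions of `q` and `x`, and the identity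
is checked by clearing denominators.
-/

open Real

theorem one_sub_mobius_add_inv_eq {K : Type*} [Field K] {Q x : K} (hQ : Q ≠ 0)
    (hQ2 : 1 + Q ^ 2 ≠ 0) (h₁ : 1 + Q * x ≠ 0) (h₂ : 1 + Q⁻¹ * x ≠ 0) :
    1 - 1 / (Q + Q⁻¹) * ((x + Q) / (1 + Q * x) + ((x + Q) / (1 + Q * x))⁻¹)
      = (1 - Q ^ 2) / (1 + Q ^ 2) * (1 / (1 + Q * x) - 1 / (1 + Q⁻¹ * x)) := by
  have hQx : 1 + Q⁻¹ * x = (x + Q) / Q := by field_simp; ring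
  have hQQ : Q + Q⁻¹ = (1 + Q ^ 2) / Q := by field_simp; ring
  have h₂' : x + Q ≠ 0 := by simpa [hQx, hQ] using h₂
  rw [hQx, hQQ, inv_div]
  field_simp
  ring

theorem rpow_mul_rpow_ofReal {q : ℝ} (hq : 0 < q) {a b c : ℝ} (h : a + b = c) :
    ((q ^ a : ℝ) : ℂ) * (q ^ b : ℝ) = (q ^ c : ℝ) := by
  rw [← Complex.ofReal_mul, ← rpow_add hq, h]

theorem bethe_xi_eq_mobius {q : ℝ} (hq : 0 < q) (m : ℝ) {w : ℂ} (hw : w ≠ 0) :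
    (w * (q ^ (m - 1/2) : ℝ) + w⁻¹ * (q ^ (-m + 1/2) : ℝ))
        / (w * (q ^ (m + 1/2) : ℝ) + w⁻¹ * (q ^ (-m - 1/2) : ℝ))
      = ((q ^ (2 * m) : ℝ) * w ^ 2 + q) / (1 + q * ((q ^ (2 * m) : ℝ) * w ^ 2)) := by
  have hc : w * (q ^ (m + 1/2) : ℝ) ≠ 0 :=
    mul_ne_zero hw (by exact_mod_cast (rpow_pos_of_pos hq _).ne')
  have e₁ := rpow_mul_rpow_ofReal hq (a := m - 1/2) (b := m + 1/2) (c := 2 * m) (by ring)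
  have e₂ := rpow_mul_rpow_ofReal hq (a := -m + 1/2) (b := m + 1/2) (c := 1) (by ring)
  have e₃ := rpow_mul_rpow_ofReal hq (a := m + 1/2) (b := m + 1/2) (c := 2 * m + 1) (by ring)
  have e₄ := rpow_mul_rpow_ofReal hq (a := -m - 1/2) (b := m + 1/2) (c := 0) (by ring)
  have e₅ := rpow_mul_rpow_ofReal hq (a := 1) (b := 2 * m) (c := 2 * m + 1) (by ring)
  simp only [rpow_zero, rpow_one, Complex.ofReal_one] at e₂ e₄ e₅
  have hww : w⁻¹ * w = 1 := inv_mul_cancel₀ hw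
  rw [← mul_div_mul_right _ _ hc]
  congr 1
  · linear_combination w ^ 2 * e₁ + (q ^ (-m + 1/2) : ℝ) * (q ^ (m + 1/2) : ℝ) * hww + e₂
  · linear_combination
      w ^ 2 * e₃ - w ^ 2 * e₅ + (q ^ (-m - 1/2) : ℝ) * (q ^ (m + 1/2) : ℝ) * hww + e₄

theorem bethe_energy_summand_general
    (q : ℝ) (hq0 : 0 < q)
    (Δ : ℝ) (hΔ : Δ = (q + q⁻¹) / 2)
    (w z : ℂ) (hw : w ≠ 0) (hwz : w ^ 2 = z)
    (m : ℝ)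
    (Xi : ℂ)
    (hXi : Xi =
      (w * (q ^ (m - 1/2) : ℝ) + w⁻¹ * (q ^ (-m + 1/2) : ℝ))
        / (w * (q ^ (m + 1/2) : ℝ) + w⁻¹ * (q ^ (-m - 1/2) : ℝ)))
    (hd1 : 1 + (q ^ (2*m + 1) : ℝ) * z ≠ 0)
    (hd2 : 1 + (q ^ (2*m - 1) : ℝ) * z ≠ 0) :
    1 - (1 / (2 * (Δ:ℂ))) * (Xi + Xi⁻¹)
      = ((1 - q^2) / (1 + q^2) : ℝ)
        * (1 / (1 + (q ^ (2*m + 1) : ℝ) * z) - 1 / (1 + (q ^ (2*m - 1) : ℝ) * z)) := by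
  have hplus : ((q ^ (2 * m + 1) : ℝ) : ℂ) * z = q * ((q ^ (2 * m) : ℝ) * z) := by
    rw [← rpow_mul_rpow_ofReal hq0 (a := 1) (b := 2 * m) (by ring), rpow_one, mul_assoc]
  have hminus : ((q ^ (2 * m - 1) : ℝ) : ℂ) * z = (q : ℂ)⁻¹ * ((q ^ (2 * m) : ℝ) * z) := by
    rw [← rpow_mul_rpow_ofReal hq0 (a := -1) (b := 2 * m) (by ring), rpow_neg_one,
      Complex.ofReal_inv, mul_assoc]
  have h2Δ : 2 * (Δ : ℂ) = q + (q : ℂ)⁻¹ := by rw [hΔ]; push_cast; ring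
  have hq : (q : ℂ) ≠ 0 := by exact_mod_cast hq0.ne'
  have hq2 : 1 + (q : ℂ) ^ 2 ≠ 0 := by exact_mod_cast (by positivity : (1 + q ^ 2 : ℝ) ≠ 0)
  rw [hplus] at hd1 ⊢
  rw [hminus] at hd2 ⊢
  rw [hXi, bethe_xi_eq_mobius hq0 m hw, hwz, h2Δ, one_sub_mobius_add_inv_eq hq hq2 hd1 hd2]
  push_cast
  rfl

/-- The Bethe ansatz energy summand identity:
`1 − (1/(2Δ))[Ξ_m(z) + Ξ_m(z)⁻¹]` telescopes. -/
theorem bethe_energy_summand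
    (q : ℝ) (hq0 : 0 < q) (hq1 : q < 1)
    (Δ : ℝ) (hΔ : Δ = (q + q⁻¹) / 2)
    (w z : ℂ) (hw : w ≠ 0) (hz : z ≠ 0) (hwz : w ^ 2 = z)
    (m : ℝ)
    (Xi : ℂ)
    (hXi : Xi =
      (w * (q ^ (m - 1/2) : ℝ) + w⁻¹ * (q ^ (-m + 1/2) : ℝ))
        / (w * (q ^ (m + 1/2) : ℝ) + w⁻¹ * (q ^ (-m - 1/2) : ℝ)))
    (hden : w * (q ^ (m + 1/2) : ℝ) + w⁻¹ * (q ^ (-m - 1/2) : ℝ) ≠ 0)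
    (hXi0 : Xi ≠ 0)
    (hd1 : 1 + (q ^ (2*m + 1) : ℝ) * z ≠ 0)
    (hd2 : 1 + (q ^ (2*m - 1) : ℝ) * z ≠ 0) :
    1 - (1 / (2 * (Δ:ℂ))) * (Xi + Xi⁻¹)
      = ((1 - q^2) / (1 + q^2) : ℝ)
        * (1 / (1 + (q ^ (2*m + 1) : ℝ) * z) - 1 / (1 + (q ^ (2*m - 1) : ℝ) * z)) :=
  bethe_energy_summand_general q hq0 Δ hΔ w z hw hwz m Xi hXi hd1 hd2
end

section
/- Let 0 < q < 1, n ∈ ℕ₊, and Θ ∈ (−π, π). Define, for half-integers m with −(n−1)/2 ≤ m ≤ (n−1)/2, Ξ_m = (q^{m−1/2} e^{iΘ/2} + q^{−m+1/2} e^{−iΘ/2}) / (q^{m+1/2} e^{iΘ/2} + q^{−m−1/2} e^{−iΘ/2}). Then for each k with 2 ≤ k ≤ n, the product Π_{j=k}^{n} Ξ_{j−(n+1)/2} has absolute value strictly less than 1. -/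
/-!
With `f(t) = q^t e^{iΘ/2} + q^{-t} e^{-iΘ/2}` each factor is `Ξ_m = f(m - 1/2) / f(m + 1/2)`, so the
product telescopes to `f(k - n/2 - 1) / f(n/2)`. Since `|f(t)|² = 2 cosh(2 t log q) + 2 cos Θ`, which
is positive for `|Θ| < π` and strictly increasing in `|t|`, and `|k - n/2 - 1| < n/2` for
`2 ≤ k ≤ n`, this quotient has modulus less than one.
-/
open Complex

theorem Finset.prod_Icc_div_succ_of_ne_zero {G₀ : Type*} [CommGroupWithZero G₀] {f : ℕ → G₀}
    (hf : ∀ i, f i ≠ 0) {m n : ℕ} (hmn : m ≤ n) :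
    ∏ i ∈ Icc m n, f i / f (i + 1) = f m / f (n + 1) := by
  have h := congrArg Units.val
    (Finset.prod_Icc_div hmn fun i => (Units.mk0 (f i) (hf i))⁻¹)
  simpa [div_eq_mul_inv, mul_comm] using h

theorem Complex.norm_sq_ofReal_mul_exp_add_ofReal_mul_exp_neg (a b φ : ℝ) :
    ‖(a : ℂ) * exp (φ * I) + (b : ℂ) * exp (-φ * I)‖ ^ 2 =
      a ^ 2 + b ^ 2 + 2 * a * b * Real.cos (2 * φ) := by
  have hcart : (a : ℂ) * exp (φ * I) + (b : ℂ) * exp (-φ * I) =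
      (((a + b) * Real.cos φ : ℝ) : ℂ) + (((a - b) * Real.sin φ : ℝ) : ℂ) * I := by
    rw [← ofReal_neg, exp_mul_I, exp_mul_I, ← ofReal_cos, ← ofReal_sin, ← ofReal_cos,
      ← ofReal_sin, Real.cos_neg, Real.sin_neg]
    push_cast
    ring
  rw [hcart, Complex.sq_norm, normSq_add_mul_I, Real.cos_two_mul]
  linear_combination (a - b) ^ 2 * Real.sin_sq_add_cos_sq φ

noncomputable def betheFactor (q Θ t : ℝ) : ℂ :=
  (q ^ t : ℝ) * exp (Θ / 2 * I) + (q ^ (-t) : ℝ) * exp (-(Θ / 2) * I)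

section betheFactor

variable {q : ℝ} (Θ : ℝ)

theorem norm_sq_betheFactor (hq : 0 < q) (t : ℝ) :
    ‖betheFactor q Θ t‖ ^ 2 = 2 * Real.cosh (2 * (t * Real.log q)) + 2 * Real.cos Θ := by
  have h := norm_sq_ofReal_mul_exp_add_ofReal_mul_exp_neg (q ^ t) (q ^ (-t)) (Θ / 2)
  push_cast at h
  have hpow : ∀ u : ℝ, q ^ u = Real.exp (u * Real.log q) := fun u => by
    rw [Real.rpow_def_of_pos hq, mul_comm]
  rw [betheFactor, h, hpow, hpow, mul_div_cancel₀ Θ two_ne_zero, Real.cosh_eq]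
  simp only [neg_mul, two_mul, neg_add, Real.exp_add, Real.exp_neg]
  field_simp
  ring

theorem betheFactor_ne_zero (hq : 0 < q) (hΘ : Θ ∈ Set.Ioo (-Real.pi) Real.pi) (t : ℝ) :
    betheFactor q Θ t ≠ 0 := by
  have hcos_half : 0 < Real.cos (Θ / 2) :=
    Real.cos_pos_of_mem_Ioo ⟨by linarith [hΘ.1], by linarith [hΘ.2]⟩
  have hcos : -1 < Real.cos Θ := by
    have := Real.cos_sq (Θ / 2)
    rw [mul_div_cancel₀ Θ two_ne_zero] at this
    nlinarith
  rw [← norm_pos_iff, ← sq_lt_sq₀ le_rfl (norm_nonneg _), norm_sq_betheFactor Θ hq]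
  linarith [Real.one_le_cosh (2 * (t * Real.log q))]

theorem norm_betheFactor_lt_norm_betheFactor_iff (hq₀ : 0 < q) (hq₁ : q ≠ 1) {s t : ℝ} :
    ‖betheFactor q Θ s‖ < ‖betheFactor q Θ t‖ ↔ |s| < |t| := by
  have hlog : 0 < |Real.log q| := abs_pos.mpr (Real.log_ne_zero_of_pos_of_ne_one hq₀ hq₁)
  rw [← pow_lt_pow_iff_left₀ (norm_nonneg _) (norm_nonneg _) two_ne_zero,
    norm_sq_betheFactor Θ hq₀, norm_sq_betheFactor Θ hq₀, add_lt_add_iff_right,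
    mul_lt_mul_iff_right₀ two_pos, Real.cosh_lt_cosh, abs_mul, abs_mul, abs_mul, abs_mul,
    mul_lt_mul_iff_right₀ (by norm_num), mul_lt_mul_iff_left₀ hlog]

end betheFactor

theorem bethe_partial_products_abs_lt_one_general
    (q : ℝ) (hq0 : 0 < q) (hq1 : q < 1)
    (n : ℕ)
    (Θ : ℝ) (hΘ : Θ ∈ Set.Ioo (-Real.pi) Real.pi)
    (Xi : ℝ → ℂ)
    (hXi : ∀ m : ℝ, Xi m =
      ((q ^ (m - 1/2) : ℝ) * Complex.exp (Θ/2 * I)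
          + (q ^ (-m + 1/2) : ℝ) * Complex.exp (-(Θ/2) * I))
        / ((q ^ (m + 1/2) : ℝ) * Complex.exp (Θ/2 * I)
          + (q ^ (-m - 1/2) : ℝ) * Complex.exp (-(Θ/2) * I))) :
    ∀ k : ℕ, 2 ≤ k → k ≤ n →
      ‖∏ j ∈ Finset.Icc k n, Xi ((j:ℝ) - ((n:ℝ) + 1) / 2)‖ < 1 := by
  intro k hk2 hkn
  set G : ℕ → ℂ := fun j => betheFactor q Θ (j - n / 2 - 1)
  have hG : ∀ j, G j ≠ 0 := fun j => betheFactor_ne_zero Θ hq0 hΘ _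
  have hterm (j : ℕ) : Xi (j - (n + 1) / 2) = G j / G (j + 1) := by
    rw [hXi]
    simp only [G, betheFactor]
    push_cast
    ring_nf
  rw [Finset.prod_congr rfl fun j _ => hterm j, Finset.prod_Icc_div_succ_of_ne_zero hG hkn,
    norm_div, div_lt_one (norm_pos_iff.mpr (hG _)),
    norm_betheFactor_lt_norm_betheFactor_iff Θ hq0 hq1.ne]
  have hk2' : (2 : ℝ) ≤ k := by exact_mod_cast hk2
  have hkn' : (k : ℝ) ≤ n := by exact_mod_cast hkn
  push_cast
  rw [abs_lt, show (n + 1 - n / 2 - 1 : ℝ) = n / 2 by ring, abs_of_nonneg (by positivity)]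
  constructor <;> linarith

/-- The partial products of the Bethe ansatz factors have modulus strictly
less than one, which yields normalizability of the droplet eigenvector. -/
theorem bethe_partial_products_abs_lt_one
    (q : ℝ) (hq0 : 0 < q) (hq1 : q < 1)
    (n : ℕ) (hn : 0 < n)
    (Θ : ℝ) (hΘ : Θ ∈ Set.Ioo (-Real.pi) Real.pi)
    (Xi : ℝ → ℂ)
    (hXi : ∀ m : ℝ, Xi m =
      ((q ^ (m - 1/2) : ℝ) * Complex.exp (Θ/2 * I)
          + (q ^ (-m + 1/2) : ℝ) * Complex.exp (-(Θ/2) * I))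
        / ((q ^ (m + 1/2) : ℝ) * Complex.exp (Θ/2 * I)
          + (q ^ (-m - 1/2) : ℝ) * Complex.exp (-(Θ/2) * I))) :
    ∀ k : ℕ, 2 ≤ k → k ≤ n →
      ‖∏ j ∈ Finset.Icc k n, Xi ((j:ℝ) - ((n:ℝ) + 1) / 2)‖ < 1 :=
  bethe_partial_products_abs_lt_one_general q hq0 hq1 n Θ hΘ Xi hXi
end

section
/- Fix n ∈ ℕ₊. For any w ∈ ℤⁿ with w₁ < ⋯ < w_n, the number of nonspanning systems of n arcs 𝔟 = {[x₁,y₁],…,[x_n,y_n]} on ℤ (each arc has x_i < y_i, all 2n endpoints distinct, and every integer strictly between x_i and y_i is an endpoint of some arc) such that there is a permutation π ∈ S_n with w_{π(k)} ∈ {x_k, y_k} for each k, is at most (2n)!/n!. -/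
open Finset

namespace NonspanArc

structure Sys (n : ℕ) (w : Fin n → ℤ) where
  s : Finset (ℤ × ℤ)
  hcard : s.card = n
  hlt : ∀ p ∈ s, p.1 < p.2
  hexc : ∀ p ∈ s, ∀ q ∈ s, p ≠ q → p.1 ≠ q.1 ∧ p.1 ≠ q.2 ∧ p.2 ≠ q.1 ∧ p.2 ≠ q.2
  hns : ∀ p ∈ s, ∀ x : ℤ, p.1 < x → x < p.2 → ∃ q ∈ s, x = q.1 ∨ x = q.2
  g : Fin n → ℤ × ℤ
  hginj : Function.Injective g
  hg : ∀ k, g k ∈ s ∧ (w k = (g k).1 ∨ w k = (g k).2)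

variable {n : ℕ} {w : Fin n → ℤ}

/-- endpoints of an arc system -/
def Epts (s : Finset (ℤ × ℤ)) : Finset ℤ := s.biUnion (fun p => {p.1, p.2})

/-- rank of an integer in the endpoint set -/
def rk (s : Finset (ℤ × ℤ)) (x : ℤ) : ℕ := ((Epts s).filter (fun y => y < x)).card

namespace Sys

def z (A : Sys n w) (k : Fin n) : ℤ :=
  if w k = (A.g k).1 then (A.g k).2 else (A.g k).1

lemma z_spec (A : Sys n w) (k : Fin n) :
    (w k = (A.g k).1 ∧ A.z k = (A.g k).2) ∨ (w k = (A.g k).2 ∧ A.z k = (A.g k).1) := by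
  unfold z
  by_cases h1 : w k = (A.g k).1
  · simp [h1]
  · rcases (A.hg k).2 with h | h
    · exact absurd h h1
    · simp [h1, h]

lemma w_ne_z (A : Sys n w) (k : Fin n) : w k ≠ A.z k := by
  have hl := A.hlt _ (A.hg k).1
  rcases A.z_spec k with ⟨h1, h2⟩ | ⟨h1, h2⟩ <;> omega

lemma g_eq (A : Sys n w) (k : Fin n) :
    A.g k = (min (w k) (A.z k), max (w k) (A.z k)) := by
  have hl := A.hlt _ (A.hg k).1
  rcases A.z_spec k with ⟨h1, h2⟩ | ⟨h1, h2⟩ <;>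
    · rw [Prod.ext_iff]
      constructor <;> simp <;> omega

lemma g_image (A : Sys n w) : image A.g univ = A.s := by
  apply eq_of_subset_of_card_le
  · intro p hp
    rw [mem_image] at hp
    obtain ⟨k, _, hk⟩ := hp
    exact hk ▸ (A.hg k).1
  · rw [card_image_of_injective _ A.hginj, card_univ, Fintype.card_fin, A.hcard]

lemma g_surj (A : Sys n w) : ∀ p ∈ A.s, ∃ k, A.g k = p := by
  intro p hp
  rw [← A.g_image, mem_image] at hp
  obtain ⟨k, _, hk⟩ := hp
  exact ⟨k, hk⟩

lemma z_ne_w (A : Sys n w) (j k : Fin n) : A.z k ≠ w j := by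
  intro h
  by_cases hkj : j = k
  · exact A.w_ne_z k (hkj ▸ h).symm
  · have hne : A.g k ≠ A.g j := fun hc => hkj (A.hginj hc).symm
    have hd := A.hexc _ (A.hg k).1 _ (A.hg j).1 hne
    have hwj := (A.hg j).2
    rcases A.z_spec k with ⟨_, h2⟩ | ⟨_, h2⟩ <;> rcases hwj with h3 | h3 <;>
      rw [h2] at h <;> rw [h3] at h <;> tauto

lemma z_inj (A : Sys n w) : Function.Injective A.z := by
  intro k j h
  by_contra hkj
  have hne : A.g k ≠ A.g j := fun hc => hkj (A.hginj hc)
  have hd := A.hexc _ (A.hg k).1 _ (A.hg j).1 hne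
  rcases A.z_spec k with ⟨_, h2⟩ | ⟨_, h2⟩ <;> rcases A.z_spec j with ⟨_, h4⟩ | ⟨_, h4⟩ <;>
    rw [h2, h4] at h <;> tauto

lemma mem_Epts_iff (A : Sys n w) {x : ℤ} :
    x ∈ Epts A.s ↔ ∃ k, x = w k ∨ x = A.z k := by
  constructor
  · intro hx
    rw [Epts, mem_biUnion] at hx
    obtain ⟨p, hp, hxp⟩ := hx
    obtain ⟨k, hk⟩ := A.g_surj p hp
    subst hk
    simp only [mem_insert, mem_singleton] at hxp
    rcases A.z_spec k with ⟨h1, h2⟩ | ⟨h1, h2⟩ <;> rcases hxp with h | h <;>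
      [exact ⟨k, Or.inl (h.trans h1.symm)⟩; exact ⟨k, Or.inr (h.trans h2.symm)⟩;
       exact ⟨k, Or.inr (h.trans h2.symm)⟩; exact ⟨k, Or.inl (h.trans h1.symm)⟩]
  · rintro ⟨k, h | h⟩ <;> subst h <;>
    · rw [Epts, mem_biUnion]
      refine ⟨A.g k, (A.hg k).1, ?_⟩
      rcases A.z_spec k with ⟨h1, h2⟩ | ⟨h1, h2⟩ <;> simp [h1, h2]

lemma w_mem (A : Sys n w) (k : Fin n) : w k ∈ Epts A.s :=
  A.mem_Epts_iff.2 ⟨k, Or.inl rfl⟩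

lemma z_mem (A : Sys n w) (k : Fin n) : A.z k ∈ Epts A.s :=
  A.mem_Epts_iff.2 ⟨k, Or.inr rfl⟩

lemma epts_eq (A : Sys n w) : Epts A.s = image w univ ∪ image A.z univ := by
  ext x
  simp only [mem_union, mem_image, mem_univ, true_and, A.mem_Epts_iff]
  constructor
  · rintro ⟨k, h | h⟩
    · exact Or.inl ⟨k, h.symm⟩
    · exact Or.inr ⟨k, h.symm⟩
  · rintro (⟨k, h⟩ | ⟨k, h⟩)
    · exact ⟨k, Or.inl h.symm⟩
    · exact ⟨k, Or.inr h.symm⟩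

lemma disj_wz (A : Sys n w) : Disjoint (image w univ) (image A.z univ) := by
  rw [disjoint_left]
  rintro x hx hz
  rw [mem_image] at hx hz
  obtain ⟨j, _, hj⟩ := hx
  obtain ⟨k, _, hk⟩ := hz
  exact A.z_ne_w j k (hk.trans hj.symm)

lemma card_Epts (A : Sys n w) (hw : StrictMono w) : (Epts A.s).card = 2 * n := by
  rw [A.epts_eq, card_union_of_disjoint A.disj_wz, card_image_of_injective _ hw.injective,
    card_image_of_injective _ A.z_inj, card_univ, Fintype.card_fin]
  ring

lemma mem_of_between (A : Sys n w) {k : Fin n} {x : ℤ}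
    (h1 : (A.g k).1 < x) (h2 : x < (A.g k).2) : x ∈ Epts A.s := by
  obtain ⟨q, hq, hx⟩ := A.hns _ (A.hg k).1 x h1 h2
  rw [Epts, mem_biUnion]
  exact ⟨q, hq, by rcases hx with h | h <;> simp [h]⟩

end Sys

lemma rk_lt (A : Sys n w) (hw : StrictMono w) {x : ℤ} (hx : x ∈ Epts A.s) :
    rk A.s x < 2 * n := by
  rw [← A.card_Epts hw]
  exact card_lt_card ((ssubset_iff_of_subset (filter_subset _ _)).2
    ⟨x, hx, by simp⟩)

lemma rk_lt_rk (A : Sys n w) {x y : ℤ} (hx : x ∈ Epts A.s) (hxy : x < y) :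
    rk A.s x < rk A.s y := by
  apply card_lt_card
  rw [ssubset_iff_of_subset]
  · exact ⟨x, mem_filter.2 ⟨hx, hxy⟩, by simp⟩
  · intro a ha
    rw [mem_filter] at ha ⊢
    exact ⟨ha.1, ha.2.trans hxy⟩

lemma rk_inj (A : Sys n w) {x y : ℤ} (hx : x ∈ Epts A.s) (hy : y ∈ Epts A.s)
    (h : rk A.s x = rk A.s y) : x = y := by
  rcases lt_trichotomy x y with hc | hc | hc
  · exact absurd h (rk_lt_rk A hx hc).ne
  · exact hc
  · exact absurd h.symm (rk_lt_rk A hy hc).ne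

lemma cut (A : Sys n w) {v : ℤ} (hv : (v + 1) ∉ Epts A.s) (k : Fin n) :
    w k ≤ v ↔ A.z k ≤ v := by
  have hl := A.hlt _ (A.hg k).1
  have hfst : (A.g k).1 ∈ Epts A.s := by
    rw [Epts, mem_biUnion]; exact ⟨A.g k, (A.hg k).1, by simp⟩
  have hsnd : (A.g k).2 ∈ Epts A.s := by
    rw [Epts, mem_biUnion]; exact ⟨A.g k, (A.hg k).1, by simp⟩
  have key : (A.g k).1 ≤ v ↔ (A.g k).2 ≤ v := by
    constructor
    · intro h
      by_contra hc
      push_neg at hc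
      have h2 : v + 1 < (A.g k).2 := by
        rcases eq_or_lt_of_le (Int.add_one_le_of_lt hc) with he | hlt
        · exact absurd (he ▸ hsnd) (by simpa using hv)
        · omega
      exact hv (A.mem_of_between (by omega) h2)
    · intro h; omega
  rcases A.z_spec k with ⟨h1, h2⟩ | ⟨h1, h2⟩
  · rw [h1, h2]; exact key
  · rw [h1, h2]; exact key.symm

lemma gap_count (A : Sys n w) (hw : StrictMono w) {v : ℤ} (hv : (v + 1) ∉ Epts A.s) :
    ((Epts A.s).filter (fun y => y ≤ v)).card
      = 2 * (univ.filter (fun k => w k ≤ v)).card := by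
  rw [A.epts_eq, filter_union, filter_image, filter_image,
    card_union_of_disjoint (A.disj_wz.mono (image_subset_image (filter_subset _ _)) (image_subset_image (filter_subset _ _))),
    card_image_of_injective _ hw.injective, card_image_of_injective _ A.z_inj]
  have : univ.filter (fun k => A.z k ≤ v) = univ.filter (fun k => w k ≤ v) :=
    filter_congr (fun k _ => (cut A hv k).symm)
  rw [this]
  ring

lemma run (A : Sys n w) (hw : StrictMono w) {x : ℤ} (hx : x ∈ Epts A.s) (j : Fin n)
    (hj : (j : ℕ) = rk A.s x / 2) :
    x = (rk A.s x : ℤ) + w j - (rk A.s (w j) : ℤ) := by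
  have hr := rk_lt A hw hx
  have hr1 : 2 * (j : ℕ) ≤ rk A.s x := by omega
  have hr2 : rk A.s x < 2 * (j : ℕ) + 2 := by omega
  have fw : ∀ v : ℤ, w j ≤ v → v < x → (v + 1) ∈ Epts A.s := by
    intro v h1 h2
    by_contra hv
    have hcount := gap_count A hw hv
    have hub : ((Epts A.s).filter (fun y => y ≤ v)).card ≤ rk A.s x := by
      apply card_le_card
      intro y hy
      rw [mem_filter] at hy ⊢
      exact ⟨hy.1, by omega⟩
    have hlb : (j : ℕ) + 1 ≤ (univ.filter (fun k => w k ≤ v)).card := by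
      have hsub : Finset.Iic j ⊆ univ.filter (fun k => w k ≤ v) := by
        intro i hi
        rw [Finset.mem_Iic] at hi
        exact mem_filter.2 ⟨mem_univ _, le_trans (hw.monotone hi) h1⟩
      calc (j : ℕ) + 1 = (Finset.Iic j).card := (Fin.card_Iic j).symm
        _ ≤ _ := card_le_card hsub
    omega
  have bw : ∀ v : ℤ, x ≤ v → v < w j → (v + 1) ∈ Epts A.s := by
    intro v h1 h2
    by_contra hv
    have hcount := gap_count A hw hv
    have hub : (univ.filter (fun k => w k ≤ v)).card ≤ (j : ℕ) := by
      have hsub : univ.filter (fun k => w k ≤ v) ⊆ Finset.Iio j := by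
        intro i hi
        obtain ⟨-, hi2⟩ := mem_filter.1 hi
        rw [Finset.mem_Iio, ← hw.lt_iff_lt]
        omega
      calc _ ≤ (Finset.Iio j).card := card_le_card hsub
        _ = (j : ℕ) := Fin.card_Iio j
    have hlb : rk A.s x + 1 ≤ ((Epts A.s).filter (fun y => y ≤ v)).card := by
      have hins : insert x ((Epts A.s).filter (fun y => y < x))
          ⊆ (Epts A.s).filter (fun y => y ≤ v) := by
        intro y hy
        rw [mem_insert] at hy
        rcases hy with rfl | hy
        · exact mem_filter.2 ⟨hx, h1⟩
        · rw [mem_filter] at hy ⊢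
          exact ⟨hy.1, by omega⟩
      have hcard := card_le_card hins
      rwa [card_insert_of_notMem (by simp)] at hcard
    omega
  rcases lt_trichotomy x (w j) with hc | hc | hc
  · have hico : Finset.Ico x (w j) ⊆ Epts A.s := by
      intro y hy
      rw [Finset.mem_Ico] at hy
      rcases eq_or_lt_of_le hy.1 with rfl | hlt
      · exact hx
      · have := bw (y - 1) (by omega) (by omega)
        simpa using this
    have hsplit : (Epts A.s).filter (fun y => y < w j)
        = (Epts A.s).filter (fun y => y < x) ∪ Finset.Ico x (w j) := by
      ext y
      simp only [mem_filter, mem_union, Finset.mem_Ico]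
      constructor
      · rintro ⟨hyE, hy⟩
        by_cases hyx : y < x
        · exact Or.inl ⟨hyE, hyx⟩
        · exact Or.inr ⟨by omega, hy⟩
      · rintro (⟨hyE, hy⟩ | ⟨h1, h2⟩)
        · exact ⟨hyE, by omega⟩
        · exact ⟨hico (Finset.mem_Ico.2 ⟨h1, h2⟩), h2⟩
    have hdisj2 : Disjoint ((Epts A.s).filter (fun y => y < x)) (Finset.Ico x (w j)) := by
      rw [disjoint_left]
      intro a ha hb
      rw [mem_filter] at ha
      rw [Finset.mem_Ico] at hb
      omega
    have hcards : rk A.s (w j) = rk A.s x + (w j - x).toNat := by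
      show ((Epts A.s).filter (fun y => y < w j)).card = _
      rw [hsplit, card_union_of_disjoint hdisj2, Int.card_Ico]
      rfl
    omega
  · rw [hc]
    omega
  · have hico : Finset.Ico (w j) x ⊆ Epts A.s := by
      intro y hy
      rw [Finset.mem_Ico] at hy
      rcases eq_or_lt_of_le hy.1 with rfl | hlt
      · exact A.w_mem j
      · have := fw (y - 1) (by omega) (by omega)
        simpa using this
    have hsplit : (Epts A.s).filter (fun y => y < x)
        = (Epts A.s).filter (fun y => y < w j) ∪ Finset.Ico (w j) x := by
      ext y
      simp only [mem_filter, mem_union, Finset.mem_Ico]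
      constructor
      · rintro ⟨hyE, hy⟩
        by_cases hyx : y < w j
        · exact Or.inl ⟨hyE, hyx⟩
        · exact Or.inr ⟨by omega, hy⟩
      · rintro (⟨hyE, hy⟩ | ⟨h1, h2⟩)
        · exact ⟨hyE, by omega⟩
        · exact ⟨hico (Finset.mem_Ico.2 ⟨h1, h2⟩), h2⟩
    have hdisj2 : Disjoint ((Epts A.s).filter (fun y => y < w j)) (Finset.Ico (w j) x) := by
      rw [disjoint_left]
      intro a ha hb
      rw [mem_filter] at ha
      rw [Finset.mem_Ico] at hb
      omega
    have hcards : rk A.s x = rk A.s (w j) + (x - w j).toNat := by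
      show ((Epts A.s).filter (fun y => y < x)).card = _
      rw [hsplit, card_union_of_disjoint hdisj2, Int.card_Ico]
      rfl
    omega

def Phifun (A : Sys n w) : Fin n → ℕ := fun k => rk A.s (A.z k)

lemma ranks_compl (A : Sys n w) (hw : StrictMono w) :
    image (fun j => rk A.s (w j)) univ
      = (Finset.range (2 * n)) \ (image (Phifun A) univ) := by
  have hzsub : image (Phifun A) univ ⊆ Finset.range (2 * n) := by
    intro i hi
    rw [mem_image] at hi
    obtain ⟨k, -, hk⟩ := hi
    rw [Finset.mem_range, ← hk]
    exact rk_lt A hw (A.z_mem k)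
  have hsub : image (fun j => rk A.s (w j)) univ
      ⊆ (Finset.range (2 * n)) \ (image (Phifun A) univ) := by
    intro i hi
    rw [mem_image] at hi
    obtain ⟨j, -, hj⟩ := hi
    rw [mem_sdiff, Finset.mem_range, ← hj]
    refine ⟨rk_lt A hw (A.w_mem j), ?_⟩
    rw [mem_image]
    rintro ⟨k, -, hk⟩
    exact A.z_ne_w j k (rk_inj A (A.z_mem k) (A.w_mem j) hk)
  apply eq_of_subset_of_card_le hsub
  have h1 : (image (Phifun A) univ).card = n := by
    rw [card_image_of_injective _ (show Function.Injective (Phifun A) from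
      fun a b hab => A.z_inj (rk_inj A (A.z_mem a) (A.z_mem b) hab)),
      card_univ, Fintype.card_fin]
  have h2 : (image (fun j => rk A.s (w j)) univ).card = n := by
    rw [card_image_of_injective _ (show Function.Injective (fun j => rk A.s (w j)) from
      fun a b hab => hw.injective (rk_inj A (A.w_mem a) (A.w_mem b) hab)),
      card_univ, Fintype.card_fin]
  rw [card_sdiff_of_subset hzsub, Finset.card_range, h1, h2]
  omega

def reconIdx (hn : 0 < n) (i : ℕ) : Fin n := ⟨i / 2 % n, Nat.mod_lt _ hn⟩

def reconF (hn : 0 < n) (w : Fin n → ℤ) (f : Fin n → ℕ)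
    (h : ((Finset.range (2 * n)) \ (image f univ)).card = n) : ℕ → ℤ := fun i =>
  (i : ℤ) + w (reconIdx hn i)
    - ((((Finset.range (2 * n)) \ (image f univ)).orderEmbOfFin h (reconIdx hn i) : ℕ) : ℤ)

def Recon (hn : 0 < n) (w : Fin n → ℤ) (f : Fin n → ℕ) : Finset (ℤ × ℤ) :=
  if h : ((Finset.range (2 * n)) \ (image f univ)).card = n then
    image (fun k => (min (w k) (reconF hn w f h (f k)),
      max (w k) (reconF hn w f h (f k)))) univ
  else ∅

lemma recon_eq (A : Sys n w) (hn : 0 < n) (hw : StrictMono w) :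
    Recon hn w (Phifun A) = A.s := by
  have hP : (Finset.range (2 * n)) \ (image (Phifun A) univ)
      = image (fun j => rk A.s (w j)) univ := (ranks_compl A hw).symm
  have hcardP : ((Finset.range (2 * n)) \ (image (Phifun A) univ)).card = n := by
    rw [hP, card_image_of_injective _ (fun a b hab => hw.injective
      (rk_inj A (A.w_mem a) (A.w_mem b) hab)), card_univ, Fintype.card_fin]
  rw [Recon, dif_pos hcardP]
  have horder : (fun j => rk A.s (w j))
      = ⇑(((Finset.range (2 * n)) \ (image (Phifun A) univ)).orderEmbOfFin hcardP) := by
    apply orderEmbOfFin_unique hcardP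
    · intro j
      rw [hP, mem_image]
      exact ⟨j, mem_univ _, rfl⟩
    · intro a b hab
      exact rk_lt_rk A (A.w_mem a) (hw hab)
  have hF : ∀ x ∈ Epts A.s, reconF hn w (Phifun A) hcardP (rk A.s x) = x := by
    intro x hx
    have hlt2n := rk_lt A hw hx
    have hidx : ((reconIdx hn (rk A.s x)) : ℕ) = rk A.s x / 2 := by
      show rk A.s x / 2 % n = rk A.s x / 2
      exact Nat.mod_eq_of_lt (by omega)
    have hrun := run A hw hx (reconIdx hn (rk A.s x)) hidx
    rw [reconF, ← congrFun horder (reconIdx hn (rk A.s x))]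
    omega
  have hz : ∀ k, reconF hn w (Phifun A) hcardP (Phifun A k) = A.z k := fun k =>
    hF (A.z k) (A.z_mem k)
  have himg : (fun k => (min (w k) (reconF hn w (Phifun A) hcardP (Phifun A k)),
      max (w k) (reconF hn w (Phifun A) hcardP (Phifun A k)))) = A.g := by
    funext k
    rw [hz k, A.g_eq k]
  rw [himg, A.g_image]

noncomputable def mkSys (s : Finset (ℤ × ℤ))
    (h : s.card = n
      ∧ (∀ p ∈ s, p.1 < p.2)
      ∧ (∀ p ∈ s, ∀ q ∈ s, p ≠ q →
          p.1 ≠ q.1 ∧ p.1 ≠ q.2 ∧ p.2 ≠ q.1 ∧ p.2 ≠ q.2)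
      ∧ (∀ p ∈ s, ∀ x : ℤ, p.1 < x → x < p.2 → ∃ q ∈ s, x = q.1 ∨ x = q.2)
      ∧ (∃ g : Fin n → ℤ × ℤ, Function.Injective g
          ∧ ∀ k, g k ∈ s ∧ (w k = (g k).1 ∨ w k = (g k).2))) : Sys n w :=
  { s := s, hcard := h.1, hlt := h.2.1, hexc := h.2.2.1, hns := h.2.2.2.1,
    g := h.2.2.2.2.choose, hginj := h.2.2.2.2.choose_spec.1,
    hg := h.2.2.2.2.choose_spec.2 }

theorem final_aux (n : ℕ) (hn : 0 < n) (w : Fin n → ℤ) (hw : StrictMono w) :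
    ({s : Finset (ℤ × ℤ) | s.card = n
        ∧ (∀ p ∈ s, p.1 < p.2)
        ∧ (∀ p ∈ s, ∀ q ∈ s, p ≠ q →
            p.1 ≠ q.1 ∧ p.1 ≠ q.2 ∧ p.2 ≠ q.1 ∧ p.2 ≠ q.2)
        ∧ (∀ p ∈ s, ∀ x : ℤ, p.1 < x → x < p.2 → ∃ q ∈ s, x = q.1 ∨ x = q.2)
        ∧ (∃ g : Fin n → ℤ × ℤ, Function.Injective g
            ∧ ∀ k, g k ∈ s ∧ (w k = (g k).1 ∨ w k = (g k).2))} : Set (Finset (ℤ × ℤ))).Finite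
    ∧ Set.ncard ({s : Finset (ℤ × ℤ) | s.card = n
        ∧ (∀ p ∈ s, p.1 < p.2)
        ∧ (∀ p ∈ s, ∀ q ∈ s, p ≠ q →
            p.1 ≠ q.1 ∧ p.1 ≠ q.2 ∧ p.2 ≠ q.1 ∧ p.2 ≠ q.2)
        ∧ (∀ p ∈ s, ∀ x : ℤ, p.1 < x → x < p.2 → ∃ q ∈ s, x = q.1 ∨ x = q.2)
        ∧ (∃ g : Fin n → ℤ × ℤ, Function.Injective g
            ∧ ∀ k, g k ∈ s ∧ (w k = (g k).1 ∨ w k = (g k).2))} : Set (Finset (ℤ × ℤ)))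
      ≤ (2 * n).factorial / n.factorial := by
  classical
  set T : Set (Finset (ℤ × ℤ)) := {s : Finset (ℤ × ℤ) | s.card = n
        ∧ (∀ p ∈ s, p.1 < p.2)
        ∧ (∀ p ∈ s, ∀ q ∈ s, p ≠ q →
            p.1 ≠ q.1 ∧ p.1 ≠ q.2 ∧ p.2 ≠ q.1 ∧ p.2 ≠ q.2)
        ∧ (∀ p ∈ s, ∀ x : ℤ, p.1 < x → x < p.2 → ∃ q ∈ s, x = q.1 ∨ x = q.2)
        ∧ (∃ g : Fin n → ℤ × ℤ, Function.Injective g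
            ∧ ∀ k, g k ∈ s ∧ (w k = (g k).1 ∨ w k = (g k).2))} with hT
  have hG : ∃ G : ↥T → (Fin n ↪ Fin (2 * n)), Function.Injective G := by
    refine ⟨fun x => ⟨fun k => ⟨Phifun (mkSys x.1 x.2) k,
      rk_lt (mkSys x.1 x.2) hw ((mkSys x.1 x.2).z_mem k)⟩, ?_⟩, ?_⟩
    · intro a b hab
      have hab' : Phifun (mkSys x.1 x.2) a = Phifun (mkSys x.1 x.2) b :=
        congrArg Fin.val hab
      exact (mkSys x.1 x.2).z_inj
        (rk_inj (mkSys x.1 x.2) ((mkSys x.1 x.2).z_mem a) ((mkSys x.1 x.2).z_mem b) hab')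
    · intro x y hxy
      have hf : Phifun (mkSys x.1 x.2) = Phifun (mkSys y.1 y.2) := by
        funext k
        exact congrArg (fun e : Fin n ↪ Fin (2 * n) => ((e k : Fin (2 * n)) : ℕ)) hxy
      apply Subtype.ext
      calc (x : Set.Elem T).1 = Recon hn w (Phifun (mkSys x.1 x.2)) :=
            (recon_eq (mkSys x.1 x.2) hn hw).symm
        _ = Recon hn w (Phifun (mkSys y.1 y.2)) := by rw [hf]
        _ = y.1 := recon_eq (mkSys y.1 y.2) hn hw
  obtain ⟨G, hGinj⟩ := hG
  have hfin : Finite ↥T := Finite.of_injective G hGinj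
  refine ⟨Set.finite_coe_iff.mp hfin, ?_⟩
  rw [← Nat.card_coe_set_eq]
  calc Nat.card ↥T ≤ Nat.card (Fin n ↪ Fin (2 * n)) :=
        Nat.card_le_card_of_injective G hGinj
    _ = (2 * n).factorial / n.factorial := by
        rw [Nat.card_eq_fintype_card, Fintype.card_embedding_eq, Fintype.card_fin,
          Fintype.card_fin, Nat.descFactorial_eq_div (by omega)]
        have h2 : 2 * n - n = n := by omega
        rw [h2]

end NonspanArc

/-- Combinatorial bound: the number of nonspanning arc systems with `n` arcs
on ℤ whose arcs can be injectively assigned endpoints among prescribed points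
`w₁ < ⋯ < w_n` is at most `(2n)!/n!`. -/
theorem nonspanning_arc_systems_count
    (n : ℕ) (hn : 0 < n)
    (w : Fin n → ℤ) (hw : StrictMono w) :
    let S : Set (Finset (ℤ × ℤ)) :=
      {s | s.card = n
        ∧ (∀ p ∈ s, p.1 < p.2)
        ∧ (∀ p ∈ s, ∀ q ∈ s, p ≠ q →
            p.1 ≠ q.1 ∧ p.1 ≠ q.2 ∧ p.2 ≠ q.1 ∧ p.2 ≠ q.2)
        ∧ (∀ p ∈ s, ∀ x : ℤ, p.1 < x → x < p.2 → ∃ q ∈ s, x = q.1 ∨ x = q.2)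
        ∧ (∃ g : Fin n → ℤ × ℤ, Function.Injective g
            ∧ ∀ k, g k ∈ s ∧ (w k = (g k).1 ∨ w k = (g k).2))}
    S.Finite ∧ S.ncard ≤ (2 * n).factorial / n.factorial := by
  intro S
  exact NonspanArc.final_aux n hn w hw
end

section
/- Let H be a Hilbert space ℓ²(ℕ₊), A a bounded, self-adjoint, positivity-preserving operator on H, P_N the orthogonal projection onto the span of the first N coordinates, and f a strictly positive eigenvector of A with eigenvalue E. Define f_N = P_N f, f̃_N = P_N A (1−P_N) f, r_N = ‖f_N‖², and Ã_N = P_N A P_N + r_N^{-1}(f̃_N ⟨f_N, ·⟩ + f_N ⟨f̃_N, ·⟩) as an operator on P_N H. Then f_N is an eigenvector of Ã_N with eigenvalue E + ⟨f_N, f̃_N⟩/r_N. -/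
/-! Since `A f = E • f`, the compression satisfies `P A P f = E • f_N - f̃_N`. On `f_N` the
rank-two term equals `f̃_N + (⟨f̃_N, f_N⟩ / r_N) • f_N`, whose first summand cancels `-f̃_N`.
When `f_N = 0` the same identity forces `f̃_N = 0`, and both sides vanish. -/

open scoped InnerProductSpace

theorem lp_truncation_idem {ι : Type*} {E : ι → Type*} [∀ i, NormedAddCommGroup (E i)]
    {p : ENNReal} (P : lp E p → lp E p) (s : ι → Prop) [DecidablePred s]
    (hP : ∀ g i, P g i = if s i then g i else 0) (g : lp E p) :
    P (P g) = P g := by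
  ext i
  rw [hP, hP]
  split_ifs <;> rfl

theorem map_map_eigenvector_truncation {R M F : Type*} [Semiring R] [AddCommGroup M] [Module R M]
    [FunLike F M M] [LinearMapClass F R M M] (A P : F) {f : M} {E : R} (hEf : A f = E • f) :
    P (A (P f)) = E • P f - P (A (f - P f)) := by
  rw [map_sub A, hEf, map_sub, map_smul, sub_sub_cancel]

theorem smul_sub_add_rankTwo_eq_smul {V : Type*} [NormedAddCommGroup V] [InnerProductSpace ℝ V]
    (E : ℝ) {u v : V} (huv : u = 0 → v = 0) :
    E • u - v + (‖u‖ ^ 2)⁻¹ • (⟪u, u⟫_ℝ • v + ⟪v, u⟫_ℝ • u) = (E + ⟪u, v⟫_ℝ / ‖u‖ ^ 2) • u := by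
  by_cases hu : u = 0
  · simp [hu, huv hu]
  have hr : ‖u‖ ^ 2 ≠ 0 := by positivity
  rw [real_inner_self_eq_norm_sq, real_inner_comm v u, smul_add, smul_smul, inv_mul_cancel₀ hr,
    one_smul, smul_smul, add_smul, div_eq_inv_mul]
  abel

theorem truncated_operator_eigenvector_general
    (A : lp (fun _ : ℕ => ℝ) 2 →L[ℝ] lp (fun _ : ℕ => ℝ) 2)
    (f : lp (fun _ : ℕ => ℝ) 2)
    (E : ℝ) (hEf : A f = E • f)
    (P : ℕ → (lp (fun _ : ℕ => ℝ) 2 →L[ℝ] lp (fun _ : ℕ => ℝ) 2))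
    (hP : ∀ (N : ℕ) (g : lp (fun _ : ℕ => ℝ) 2) (i : ℕ),
      (P N g) i = if i < N then g i else 0)
    (N : ℕ)
    (fN : lp (fun _ : ℕ => ℝ) 2) (hfN : fN = P N f)
    (ftN : lp (fun _ : ℕ => ℝ) 2) (hftN : ftN = P N (A (f - P N f)))
    (rN : ℝ) (hrN : rN = ‖fN‖ ^ 2)
    (Atil : lp (fun _ : ℕ => ℝ) 2 →L[ℝ] lp (fun _ : ℕ => ℝ) 2)
    (hAtil : ∀ g, Atil g = P N (A (P N g))
      + rN⁻¹ • ((inner ℝ fN g : ℝ) • ftN + (inner ℝ ftN g : ℝ) • fN)) :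
    Atil fN = (E + (inner ℝ fN ftN : ℝ) / rN) • fN := by
  have hidem : P N fN = fN := hfN ▸ lp_truncation_idem (P N) (· < N) (hP N) f
  have hcomp : P N (A fN) = E • fN - ftN := by
    rw [hfN, hftN]
    exact map_map_eigenvector_truncation A (P N) hEf
  have hzero : fN = 0 → ftN = 0 := fun h => by simpa [h] using hcomp
  rw [hAtil, hidem, hcomp, hrN]
  exact smul_sub_add_rankTwo_eq_smul E hzero

/-- The key step of the infinite-dimensional Perron–Frobenius argument:
`f_N` is an eigenvector of the modified finite-rank-perturbed operator `Ã_N`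
with eigenvalue `E + ⟨f_N, f̃_N⟩ / ‖f_N‖²`. -/
theorem truncated_operator_eigenvector
    (A : lp (fun _ : ℕ => ℝ) 2 →L[ℝ] lp (fun _ : ℕ => ℝ) 2)
    (hA : IsSelfAdjoint A)
    (hpos : ∀ g : lp (fun _ : ℕ => ℝ) 2, (∀ i, 0 ≤ g i) → ∀ i, 0 ≤ (A g) i)
    (f : lp (fun _ : ℕ => ℝ) 2) (hf : ∀ i, 0 < f i)
    (E : ℝ) (hEf : A f = E • f)
    (P : ℕ → (lp (fun _ : ℕ => ℝ) 2 →L[ℝ] lp (fun _ : ℕ => ℝ) 2))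
    (hP : ∀ (N : ℕ) (g : lp (fun _ : ℕ => ℝ) 2) (i : ℕ),
      (P N g) i = if i < N then g i else 0)
    (N : ℕ) (hN : 0 < N)
    (fN : lp (fun _ : ℕ => ℝ) 2) (hfN : fN = P N f)
    (ftN : lp (fun _ : ℕ => ℝ) 2) (hftN : ftN = P N (A (f - P N f)))
    (rN : ℝ) (hrN : rN = ‖fN‖ ^ 2)
    (Atil : lp (fun _ : ℕ => ℝ) 2 →L[ℝ] lp (fun _ : ℕ => ℝ) 2)
    (hAtil : ∀ g, Atil g = P N (A (P N g))
      + rN⁻¹ • ((inner ℝ fN g : ℝ) • ftN + (inner ℝ ftN g : ℝ) • fN)) :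
    Atil fN = (E + (inner ℝ fN ftN : ℝ) / rN) • fN :=
  truncated_operator_eigenvector_general A f E hEf P hP N fN hfN ftN hftN rN hrN Atil hAtil
end

section
/- Let 0 < q < 1, n ∈ ℕ₊, and θ ∈ (−π/n, π/n). With Θ = 2 arctan(((1+qⁿ)/(1−qⁿ)) tan(nθ/2)) and z = e^{iΘ}, the product identity (z^{1/2} q^{−M−1/2} + z^{−1/2} q^{M+1/2}) / (z^{1/2} q^{M+1/2} + z^{−1/2} q^{−M−1/2}) = e^{inθ} holds, where M = (n−1)/2 and z^{1/2} = e^{iΘ/2}. -/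
/-!
Put `φ = Θ/2` and `a = q^{n/2}`. Multiplying numerator and denominator by `a` turns the left-hand
side into `w / conj w` with `w = e^{iφ} + qⁿ e^{-iφ} = (1 + qⁿ) cos φ + i (1 - qⁿ) sin φ`.
The definition of `Θ` says exactly that `(1 - qⁿ) sin φ / ((1 + qⁿ) cos φ) = tan (nθ/2)`, so `w` is
a nonzero real multiple of `e^{inθ/2}`, and then `w / conj w = e^{inθ}`.
-/

open Complex ComplexConjugate

lemma conj_exp_ofReal_mul_I (x : ℝ) : conj (exp (x * I)) = exp (-x * I) := by
  rw [← exp_conj, map_mul, conj_ofReal, conj_I, neg_mul, mul_neg]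

lemma ofReal_mul_exp_div_conj (r t : ℝ) (hr : r ≠ 0) :
    r * exp (t * I) / conj (r * exp (t * I)) = exp (2 * t * I) := by
  rw [map_mul, conj_ofReal, conj_exp_ofReal_mul_I, mul_div_mul_left _ _ (ofReal_ne_zero.mpr hr),
    div_eq_mul_inv, ← exp_neg, ← exp_add]
  ring_nf

lemma exp_mul_inv_add_exp_neg_mul_div_eq_div_conj (a φ : ℝ) (ha : a ≠ 0) :
    (exp (φ * I) * (a⁻¹ : ℝ) + exp (-φ * I) * a) / (exp (φ * I) * a + exp (-φ * I) * (a⁻¹ : ℝ))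
      = (exp (φ * I) + (a ^ 2 : ℝ) * exp (-φ * I))
        / conj (exp (φ * I) + (a ^ 2 : ℝ) * exp (-φ * I)) := by
  have ha' : (a : ℂ) ≠ 0 := ofReal_ne_zero.mpr ha
  rw [← ofReal_neg, map_add, map_mul, conj_ofReal, conj_exp_ofReal_mul_I, conj_exp_ofReal_mul_I,
    ← mul_div_mul_left _ _ ha']
  push_cast
  congr 1
  · field_simp
  · field_simp
    ring

lemma sin_arctan_eq_mul_cos (x : ℝ) : Real.sin (Real.arctan x) = x * Real.cos (Real.arctan x) := by
  rw [Real.sin_arctan, Real.cos_arctan, mul_one_div]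

lemma exp_add_mul_exp_neg_of_eq_arctan (b t φ : ℝ) (hb : b ≠ 1) (ht : Real.cos t ≠ 0)
    (hφ : φ = Real.arctan ((1 + b) / (1 - b) * Real.tan t)) :
    exp (φ * I) + b * exp (-φ * I) = ((1 + b) * Real.cos φ / Real.cos t : ℝ) * exp (t * I) := by
  have hsin : (1 - b) * Real.sin φ = (1 + b) * Real.cos φ * Real.tan t := by
    have : 1 - b ≠ 0 := sub_ne_zero.mpr hb.symm
    rw [hφ, sin_arctan_eq_mul_cos]
    field_simp
  have hre : (1 + b) * Real.cos φ / Real.cos t * Real.cos t = (1 + b) * Real.cos φ :=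
    div_mul_cancel₀ _ ht
  have him : (1 + b) * Real.cos φ / Real.cos t * Real.sin t = (1 - b) * Real.sin φ := by
    rw [hsin, Real.tan_eq_sin_div_cos]
    ring
  calc exp (φ * I) + b * exp (-φ * I)
      = ((1 + b) * Real.cos φ : ℝ) + ((1 - b) * Real.sin φ : ℝ) * I := by
        rw [← ofReal_neg, exp_ofReal_mul_I, exp_ofReal_mul_I, Real.cos_neg, Real.sin_neg]
        push_cast; ring
    _ = ((1 + b) * Real.cos φ / Real.cos t : ℝ) * exp (t * I) := by
        rw [exp_ofReal_mul_I, mul_add, ← mul_assoc, ← ofReal_mul, ← ofReal_mul, hre, him]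

/-- The choice `z = e^{iΘ}` solves the translation-invariance condition for the
Bethe ansatz droplet eigenvector. -/
theorem bethe_translation_invariance_condition
    (q : ℝ) (hq0 : 0 < q) (hq1 : q < 1)
    (n : ℕ) (hn : 0 < n)
    (θ : ℝ) (hθ : θ ∈ Set.Ioo (-(Real.pi / n)) (Real.pi / n))
    (Θ : ℝ)
    (hΘ : Θ = 2 * Real.arctan (((1 + q ^ n) / (1 - q ^ n)) * Real.tan (n * θ / 2)))
    (M : ℝ) (hM : M = ((n:ℝ) - 1) / 2) :
    (Complex.exp (Θ/2 * I) * (q ^ (-M - 1/2) : ℝ)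
        + Complex.exp (-(Θ/2) * I) * (q ^ (M + 1/2) : ℝ))
      / (Complex.exp (Θ/2 * I) * (q ^ (M + 1/2) : ℝ)
        + Complex.exp (-(Θ/2) * I) * (q ^ (-M - 1/2) : ℝ))
      = Complex.exp (n * θ * I) := by
  have hpow : q ^ (M + 1/2) = q ^ ((n : ℝ) / 2) := by rw [hM]; ring_nf
  have hpow_neg : q ^ (-M - 1/2) = (q ^ ((n : ℝ) / 2))⁻¹ := by
    rw [← hpow, ← Real.rpow_neg hq0.le]; ring_nf
  have hsq : (q ^ ((n : ℝ) / 2)) ^ 2 = q ^ n := by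
    rw [← Real.rpow_natCast, ← Real.rpow_mul hq0.le]; norm_num
  have hqn : q ^ n ≠ 1 := (pow_lt_one₀ hq0.le hq1 hn.ne').ne
  have hn' : (0 : ℝ) < n := Nat.cast_pos.mpr hn
  have hcos : 0 < Real.cos (n * θ / 2) := by
    apply Real.cos_pos_of_mem_Ioo
    have := (lt_div_iff₀' hn').mp hθ.2
    have := (div_lt_iff₀' hn').mp (neg_div (n : ℝ) Real.pi ▸ hθ.1)
    constructor <;> linarith
  have hφ : Θ / 2 = Real.arctan ((1 + q ^ n) / (1 - q ^ n) * Real.tan (n * θ / 2)) := by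
    rw [hΘ]; ring
  have hcos_φ : 0 < Real.cos (Θ / 2) := hφ ▸ Real.cos_arctan_pos _
  have hhalf : (Θ : ℂ) / 2 = ((Θ / 2 : ℝ) : ℂ) := by push_cast; rfl
  rw [hpow, hpow_neg, hhalf, exp_mul_inv_add_exp_neg_mul_div_eq_div_conj _ _ (by positivity), hsq,
    exp_add_mul_exp_neg_of_eq_arctan _ _ _ hqn hcos.ne' hφ,
    ofReal_mul_exp_div_conj _ _ (by positivity)]
  push_cast
  congr 1
  ring
end
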